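/- arXiv:2106.14020 — 4 statements merged into one kernel-verified Lean document; each statement's English description precedes it below -/
import Mathlib

section
/- Let k be a positive natural number and for i : ZMod k let e_i : ZMod k → Bool be the indicator sequence with e_i j = true if and only if j = i. Then for all i, i' : ZMod k, the pushforward of the uniform distribution on ZMod k under r ↦ rot r e_i equals the pushforward under r ↦ rot r e_{i'}. Consequently, after a uniformly random cyclic shift, the revealed position of the unique `true` entry is uniformly distributed over all k positions and is independent of i (hiding property of the chosen cut protocol). -/
/-- Cyclic shift of a sequence indexed by `ZMod k` by `r` positions. -/
def rot {k : ℕ} {α : Type*} (r : ZMod k) (s : ZMod k → α) : ZMod k → α :=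
  fun j => s (j + r)

/-- The indicator sequence with `true` exactly at position `i`. -/
def e {k : ℕ} (i : ZMod k) : ZMod k → Bool :=
  fun j => decide (j = i)

/-- Hiding property of the chosen cut protocol: after a uniformly random cyclic shift,
the distribution of the shifted indicator sequence does not depend on the chosen
position `i`. -/
theorem chosen_cut_hiding (k : ℕ) [NeZero k] (i i' : ZMod k) :
    (PMF.uniformOfFintype (ZMod k)).map (fun r => rot r (e i)) =
      (PMF.uniformOfFintype (ZMod k)).map (fun r => rot r (e i')) := by
  have key : ∀ r : ZMod k, rot r (e i) = rot (r + (i' - i)) (e i') := by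
    intro r
    funext j
    simp only [rot, e, decide_eq_decide]
    constructor
    · intro h; rw [← add_assoc, h]; ring
    · intro h; linear_combination h
  have huni : (PMF.uniformOfFintype (ZMod k)).map (· + (i' - i)) =
      PMF.uniformOfFintype (ZMod k) := by
    ext x
    rw [PMF.map_apply]
    rw [tsum_eq_single (x - (i' - i)) (by intro b hb; simp; intro h; exact absurd (by rw [h]; ring) hb)]
    simp [PMF.uniformOfFintype_apply]
  calc (PMF.uniformOfFintype (ZMod k)).map (fun r => rot r (e i))
      = (PMF.uniformOfFintype (ZMod k)).map
          ((fun r => rot r (e i')) ∘ (· + (i' - i))) := by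
        congr 1; funext r; simp [Function.comp, key r]
    _ = ((PMF.uniformOfFintype (ZMod k)).map (· + (i' - i))).map
          (fun r => rot r (e i')) := by rw [PMF.map_comp]
    _ = (PMF.uniformOfFintype (ZMod k)).map (fun r => rot r (e i')) := by rw [huni]
end

section
/- Let u, v : List Bool with u a sublist of v (u <+ v) and u.count true = v.count true (so u is obtained from v by deleting only false entries). Then trueRuns u is a coarsening of trueRuns v obtained by summing consecutive groups: there exists a list p of nonempty lists of natural numbers such that p.flatten = trueRuns v and p.map List.sum = trueRuns u. In particular, deleting white cards can only merge adjacent blocks of black cards, preserving their left-to-right order. -/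
section SplitByLemmas

open List

private theorem splitBy_loop_eq_append' {α : Type*} (r : α → α → Bool) (l : List α) (a : α)
    (g : List α) (gs : List (List α)) :
    splitBy.loop r l a g gs = gs.reverse ++ splitBy.loop r l a g [] := by
  induction l generalizing a g gs with
  | nil => simp [splitBy.loop]
  | cons b l ih =>
    simp only [splitBy.loop]
    cases r a b
    · simp only []
      rw [ih _ _ ((a :: g).reverse :: gs), ih _ _ [(a :: g).reverse]]
      simp
    · exact ih _ _ gs

private theorem splitBy_loop_modifyHead' {α : Type*} (r : α → α → Bool) (l : List α) (a : α)
    (g : List α) :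
    splitBy.loop r l a g [] = (splitBy r (a :: l)).modifyHead (g.reverse ++ ·) := by
  induction l generalizing a g with
  | nil => simp [splitBy, splitBy.loop]
  | cons b l ih =>
    show splitBy.loop r (b :: l) a g [] = (splitBy.loop r (b :: l) a [] []).modifyHead _
    simp only [splitBy.loop]
    cases r a b
    · rw [splitBy_loop_eq_append' r l b [] [(a :: g).reverse],
          splitBy_loop_eq_append' r l b [] [[a].reverse]]
      cases h : splitBy.loop r l b [] [] <;> simp
    · simp only [ih]
      cases h : splitBy r (b :: l) <;> simp

private theorem splitBy_cons_cons_true' {α : Type*} {r : α → α → Bool} {a b : α} (l : List α)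
    (h : r a b = true) :
    splitBy r (a :: b :: l) = (splitBy r (b :: l)).modifyHead (a :: ·) := by
  show splitBy.loop r (b :: l) a [] [] = _
  simp only [splitBy.loop, h]
  rw [splitBy_loop_modifyHead']
  rfl

private theorem splitBy_cons_cons_false' {α : Type*} {r : α → α → Bool} {a b : α} (l : List α)
    (h : r a b = false) :
    splitBy r (a :: b :: l) = [a] :: splitBy r (b :: l) := by
  show splitBy.loop r (b :: l) a [] [] = _
  simp only [splitBy.loop, h]
  rw [splitBy_loop_eq_append', splitBy_loop_modifyHead']
  cases splitBy r (b :: l) <;> simp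

private theorem head_splitBy' {α : Type*} (r : α → α → Bool) (a : α) (l : List α) :
    ∃ h t, splitBy r (a :: l) = (a :: h) :: t := by
  induction l generalizing a with
  | nil => exact ⟨[], [], rfl⟩
  | cons b l ih =>
    obtain ⟨h, t, hht⟩ := ih b
    cases hr : r a b
    · exact ⟨[], splitBy r (b :: l), splitBy_cons_cons_false' l hr⟩
    · exact ⟨b :: h, t, by rw [splitBy_cons_cons_true' l hr, hht]; rfl⟩

private theorem splitBy_cct {a b : Bool} (l : List Bool) (hab : a = b) :
    (a :: b :: l).splitBy (· = ·) = ((b :: l).splitBy (· = ·)).modifyHead (a :: ·) :=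
  splitBy_cons_cons_true' l (by simp [hab])

private theorem splitBy_ccf {a b : Bool} (l : List Bool) (hab : a ≠ b) :
    (a :: b :: l).splitBy (· = ·) = [a] :: (b :: l).splitBy (· = ·) :=
  splitBy_cons_cons_false' l (by simp [hab])

end SplitByLemmas

/-- The list of lengths of the maximal blocks of consecutive `true` entries of a
Boolean list, in order from left to right. -/
def trueRuns (w : List Bool) : List ℕ :=
  ((w.splitBy (· = ·)).filter (fun g => true ∈ g)).map List.length

section TrueRunsLemmas

open List

private theorem splitBy_const {h : List Bool} {t : List (List Bool)} {a : Bool} {w : List Bool}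
    (hw : w.splitBy (· = ·) = (a :: h) :: t) : ∀ x ∈ a :: h, x = a := by
  have hm : (a :: h) ∈ w.splitBy (· = ·) := by rw [hw]; exact mem_cons_self
  have hc := isChain_of_mem_splitBy hm
  simp only [decide_eq_true_eq] at hc
  have hp := isChain_iff_pairwise.mp hc
  intro x hx
  rcases mem_cons.mp hx with rfl | hx
  · rfl
  · exact (List.rel_of_pairwise_cons hp hx).symm

private theorem mem_true_iff {h : List Bool} {t : List (List Bool)} {a : Bool} {w : List Bool}
    (hw : w.splitBy (· = ·) = (a :: h) :: t) : (true ∈ a :: h) ↔ a = true := by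
  constructor
  · intro hm; exact (splitBy_const hw true hm).symm
  · rintro rfl; exact mem_cons_self

private theorem trueRuns_false_cons (w : List Bool) : trueRuns (false :: w) = trueRuns w := by
  cases w with
  | nil => decide
  | cons b w =>
    cases b
    · obtain ⟨h, t, hht⟩ := head_splitBy' (· = ·) false w
      have h2 : (false :: false :: w).splitBy (· = ·) = (false :: false :: h) :: t := by
        rw [splitBy_cct w rfl, hht]; rfl
      have hm1 : ¬ (true ∈ false :: h) := by simp [mem_true_iff hht]
      have hm2 : ¬ (true ∈ false :: false :: h) := by simp [mem_true_iff h2]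
      simp [trueRuns, h2, hht, List.filter_cons, hm1, hm2]
    · have h2 := splitBy_ccf (a := false) (b := true) w (by decide)
      simp [trueRuns, h2, List.filter_cons]

private theorem trueRuns_true_cons_of (w : List Bool) (hw : w.head? ≠ some true) :
    trueRuns (true :: w) = 1 :: trueRuns w := by
  cases w with
  | nil => decide
  | cons b w =>
    cases b
    · have h2 := splitBy_ccf (a := true) (b := false) w (by decide)
      simp [trueRuns, h2, List.filter_cons]
    · simp at hw

private theorem trueRuns_true_true (w : List Bool) :
    ∃ n t, trueRuns (true :: w) = n :: t ∧ trueRuns (true :: true :: w) = (n + 1) :: t := by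
  obtain ⟨h, t, hht⟩ := head_splitBy' (· = ·) true w
  have h2 : (true :: true :: w).splitBy (· = ·) = (true :: true :: h) :: t := by
    rw [splitBy_cct w rfl, hht]; rfl
  refine ⟨h.length + 1, ((t.filter (fun g => true ∈ g)).map List.length), ?_, ?_⟩
  · simp [trueRuns, hht, List.filter_cons]
  · simp [trueRuns, h2, List.filter_cons]

end TrueRunsLemmas

/-- If `u` is obtained from `v` by deleting only `false` entries, then the list of
true-run lengths of `u` is a coarsening of that of `v`, obtained by summing
consecutive groups: deleting white cards can only merge adjacent black blocks,
preserving their left-to-right order. -/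
theorem trueRuns_coarsening (u v : List Bool) (hsub : List.Sublist u v)
    (hcount : u.count true = v.count true) :
    ∃ p : List (List ℕ), (∀ g ∈ p, g ≠ []) ∧
      p.flatten = trueRuns v ∧ p.map List.sum = trueRuns u := by
  induction v generalizing u with
  | nil =>
    obtain rfl := List.sublist_nil.mp hsub
    exact ⟨[], by simp, by simp [trueRuns], by simp [trueRuns]⟩
  | cons b v ih =>
    cases b
    · rw [trueRuns_false_cons]
      cases hsub with
      | cons _ h => exact ih u h (by simpa using hcount)
      | cons_cons _ h =>
        rw [trueRuns_false_cons]
        exact ih _ h (by simpa using hcount)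
    · cases hsub with
      | cons _ h =>
        exfalso
        have hle := h.count_le true
        simp [List.count_cons] at hcount
        omega
      | cons_cons _ h =>
        rename_i u'
        have hc : u'.count true = v.count true := by simpa using hcount
        obtain ⟨p, hne, hflat, hsum⟩ := ih u' h hc
        by_cases hv : v.head? = some true
        · -- v = true :: v''
          obtain ⟨v'', rfl⟩ : ∃ v'', v = true :: v'' := by
            cases v with
            | nil => simp at hv
            | cons c v'' =>
              cases c
              · simp at hv
              · exact ⟨v'', rfl⟩
          -- u' = true :: u''
          obtain ⟨u'', rfl⟩ : ∃ u'', u' = true :: u'' := by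
            cases h with
            | cons _ h' =>
              exfalso
              have hle := h'.count_le true
              simp [List.count_cons] at hc
              omega
            | cons_cons _ h' => exact ⟨_, rfl⟩
          obtain ⟨n, t, hnt, hbu⟩ := trueRuns_true_true u''
          obtain ⟨m, s, hms, hbv⟩ := trueRuns_true_true v''
          rw [hnt] at hsum
          rw [hms] at hflat
          rcases p with _ | ⟨g, p'⟩
          · simp at hsum
          rcases g with _ | ⟨x, g'⟩
          · exact absurd rfl (hne [] List.mem_cons_self)
          simp only [List.map_cons, List.cons.injEq] at hsum
          simp only [List.flatten_cons, List.cons_append, List.cons.injEq] at hflat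
          refine ⟨((m + 1) :: g') :: p', ?_, ?_, ?_⟩
          · intro g hg
            rcases List.mem_cons.mp hg with rfl | hg
            · simp
            · exact hne g (List.mem_cons_of_mem _ hg)
          · rw [hbv]
            simp [hflat.2]
          · rw [hbu]
            simp only [List.map_cons, hsum.2, List.cons.injEq, and_true]
            have : x + g'.sum = n := by simpa using hsum.1
            simp [← hflat.1, ← this]
            omega
        · rw [trueRuns_true_cons_of v hv]
          by_cases hu : u'.head? = some true
          · obtain ⟨u'', rfl⟩ : ∃ u'', u' = true :: u'' := by
              cases u' with
              | nil => simp at hu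
              | cons c u'' =>
                cases c
                · simp at hu
                · exact ⟨u'', rfl⟩
            obtain ⟨n, t, hnt, hbu⟩ := trueRuns_true_true u''
            rw [hnt] at hsum
            rcases p with _ | ⟨g, p'⟩
            · simp at hsum
            simp only [List.map_cons, List.cons.injEq] at hsum
            refine ⟨(1 :: g) :: p', ?_, ?_, ?_⟩
            · intro g' hg'
              rcases List.mem_cons.mp hg' with rfl | hg'
              · simp
              · exact hne g' (List.mem_cons_of_mem _ hg')
            · simpa using hflat
            · rw [hbu]
              simp [hsum.1, hsum.2]
              omega
          · rw [trueRuns_true_cons_of u' hu]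
            refine ⟨[1] :: p, ?_, by simpa using hflat, by simpa using hsum⟩
            intro g hg
            rcases List.mem_cons.mp hg with rfl | hg
            · simp
            · exact hne g hg
end

section
/- Let u, v : List Bool with u a sublist of v (u <+ v) and u.count true = v.count true. If moreover (trueRuns u).length = (trueRuns v).length, then trueRuns u = trueRuns v. That is, if deleting only false entries does not change the number of maximal true-blocks, then the ordered list of block lengths is unchanged. -/
namespace SB
open List

theorem loop_append {α} (r : α → α → Bool) (l : List α) (a : α) (g : List α)
    (gs : List (List α)) :
    splitBy.loop r l a g gs = gs.reverse ++ splitBy.loop r l a g [] := by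
  induction l generalizing a g gs with
  | nil => simp [splitBy.loop]
  | cons b l IH =>
    simp only [splitBy.loop]
    cases r a b
    · simp only [cond_false]
      rw [IH b [] ((a :: g).reverse :: gs), IH b [] [(a :: g).reverse]]
      simp
    · simp only [cond_true]
      exact IH _ _ _

theorem loop_group {α} (r : α → α → Bool) (l : List α) (a : α) (g : List α) :
    ∃ h t, splitBy.loop r l a [] [] = h :: t ∧
      splitBy.loop r l a g [] = (g.reverse ++ h) :: t := by
  induction l generalizing a g with
  | nil => exact ⟨[a], [], by simp [splitBy.loop]⟩
  | cons b l IH =>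
    simp only [splitBy.loop]
    cases r a b
    · simp only [cond_false]
      rw [loop_append r l b [] [(a :: g).reverse], loop_append r l b [] [[a].reverse]]
      exact ⟨[a], splitBy.loop r l b [] [], by simp⟩
    · simp only [cond_true]
      obtain ⟨h, t, h1, h2⟩ := IH b [a]
      obtain ⟨h', t', h1', h2'⟩ := IH b (a :: g)
      rw [h1] at h1'
      injection h1' with e1 e2
      subst e1; subst e2
      exact ⟨a :: h, t, by rw [h2]; simp, by rw [h2']; simp⟩

theorem splitBy_cons_cons_true {α} (r : α → α → Bool) {a b : α} (l : List α)
    (hr : r a b = true) :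
    ∃ h t, (b :: l).splitBy r = h :: t ∧ (a :: b :: l).splitBy r = (a :: h) :: t := by
  obtain ⟨h, t, h1, h2⟩ := loop_group r l b [a]
  exact ⟨h, t, h1, by simp only [splitBy, splitBy.loop, hr, cond_true]; rw [h2]; simp⟩

theorem splitBy_cons_cons_false {α} (r : α → α → Bool) {a b : α} (l : List α)
    (hr : r a b = false) :
    (a :: b :: l).splitBy r = [a] :: (b :: l).splitBy r := by
  simp only [splitBy, splitBy.loop, hr, cond_false]
  rw [loop_append r l b [] [[a].reverse]]
  simp

theorem splitBy_bool (a : Bool) (l : List Bool) :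
    (a :: l).splitBy (· = ·) =
      (a :: l.takeWhile (· = a)) :: (l.dropWhile (· = a)).splitBy (· = ·) := by
  induction l generalizing a with
  | nil => simp [splitBy, splitBy.loop]
  | cons b l IH =>
    by_cases hab : b = a
    · subst hab
      obtain ⟨h, t, h1, h2⟩ :=
        splitBy_cons_cons_true (a := b) (b := b) (fun x y : Bool => decide (x = y)) l (by simp)
      rw [IH b] at h1
      injection h1 with e1 e2
      rw [h2, ← e1, ← e2]
      simp [List.takeWhile, List.dropWhile]
    · have h1 : decide (a = b) = false := by simp [Ne.symm hab]
      have h2 : decide (b = a) = false := by simp [hab]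
      rw [splitBy_cons_cons_false _ l h1]
      simp only [List.takeWhile, List.dropWhile, h2, cond_false]

end SB

def runs : List Bool → List ℕ
  | [] => []
  | false :: l => runs l
  | true :: l => ((l.takeWhile (· = true)).length + 1) :: runs (l.dropWhile (· = true))
termination_by l => l.length
decreasing_by
  · simp
  · simpa using Nat.lt_succ_of_le ((List.dropWhile_sublist _).length_le)

theorem runs_dropWhile_false (l : List Bool) :
    runs (l.dropWhile (· = false)) = runs l := by
  induction l with
  | nil => rfl
  | cons b l IH =>
    cases b
    · simpa [List.dropWhile, runs] using IH
    · simp [List.dropWhile, runs]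

theorem trueRuns_eq_runs : ∀ w : List Bool, trueRuns w = runs w
  | [] => by simp [trueRuns, runs, List.splitBy]
  | false :: l => by
    rw [runs, trueRuns, SB.splitBy_bool]
    have hmem : true ∉ (false :: l.takeWhile (· = false)) := by
      simp only [List.mem_cons]
      rintro (h | h)
      · cases h
      · simpa using List.mem_takeWhile_imp h
    rw [List.filter_cons_of_neg (by simpa using hmem)]
    have := trueRuns_eq_runs (l.dropWhile (· = false))
    rw [trueRuns] at this
    rw [this, runs_dropWhile_false]
  | true :: l => by
    rw [runs, trueRuns, SB.splitBy_bool]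
    rw [List.filter_cons_of_pos (by simp)]
    have := trueRuns_eq_runs (l.dropWhile (· = true))
    rw [trueRuns] at this
    rw [List.map_cons, this]
    simp
termination_by w => w.length
decreasing_by
  · simpa using Nat.lt_succ_of_le ((List.dropWhile_sublist _).length_le)
  · simpa using Nat.lt_succ_of_le ((List.dropWhile_sublist _).length_le)

theorem runs_false_cons (l : List Bool) : runs (false :: l) = runs l := by rw [runs]

theorem runs_true_nil : runs [true] = [1] := by
  rw [runs]; simp [List.takeWhile, List.dropWhile, runs]

theorem runs_true_false (l : List Bool) : runs (true :: false :: l) = 1 :: runs l := by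
  rw [runs]
  simp [List.takeWhile, List.dropWhile, runs_false_cons]

theorem runs_true_true (l : List Bool) :
    ∃ n r, runs (true :: l) = n :: r ∧ runs (true :: true :: l) = (n + 1) :: r := by
  refine ⟨(l.takeWhile (· = true)).length + 1, runs (l.dropWhile (· = true)), by rw [runs], ?_⟩
  rw [runs]
  simp [List.takeWhile, List.dropWhile]

theorem length_runs_true_le (l : List Bool) :
    (runs l).length ≤ (runs (true :: l)).length ∧
      (runs (true :: l)).length ≤ (runs l).length + 1 := by
  match l with
  | [] => simp [runs_true_nil, runs]
  | false :: l' => rw [runs_true_false, runs_false_cons]; simp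
  | true :: l' =>
    obtain ⟨n, r, e1, e2⟩ := runs_true_true l'
    rw [e1, e2]
    simp

theorem length_runs_mono {u v : List Bool} (h : u.Sublist v) :
    (runs u).length ≤ (runs v).length ∧
      (runs (true :: u)).length ≤ (runs (true :: v)).length := by
  induction h with
  | slnil => exact ⟨le_refl _, le_refl _⟩
  | @cons u v' b h IH =>
    obtain ⟨i1, i2⟩ := IH
    cases b
    · rw [runs_false_cons, runs_true_false]
      exact ⟨i1, le_trans (length_runs_true_le u).2 (by simpa using Nat.add_le_add_right i1 1)⟩
    · obtain ⟨n, r, e1, e2⟩ := runs_true_true v'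
      rw [e1, e2]
      refine ⟨le_trans i1 ?_, ?_⟩
      · exact le_trans (length_runs_true_le v').1 (le_of_eq (by rw [e1]))
      · simpa [e1] using i2
  | @cons_cons u' v' a h IH =>
    obtain ⟨i1, i2⟩ := IH
    cases a
    · rw [runs_false_cons, runs_false_cons, runs_true_false, runs_true_false]
      exact ⟨i1, by simpa using Nat.add_le_add_right i1 1⟩
    · obtain ⟨n, r, e1, e2⟩ := runs_true_true u'
      obtain ⟨m, s, f1, f2⟩ := runs_true_true v'
      rw [e1, e2, f1, f2]
      rw [e1, f1] at i2
      simp only [List.length_cons] at i2 ⊢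
      omega

theorem runs_eq {u v : List Bool} (hsub : u.Sublist v)
    (hcount : u.count true = v.count true)
    (hlen : (runs u).length = (runs v).length) : runs u = runs v := by
  induction hsub with
  | slnil => rfl
  | @cons u v' b h IH =>
    cases b
    · rw [runs_false_cons] at hlen ⊢
      refine IH ?_ hlen
      simpa [List.count_cons] using hcount
    · have := h.count_le true
      simp [List.count_cons] at hcount
      omega
  | @cons_cons u' v' a h IH =>
    have hcount' : u'.count true = v'.count true := by
      simpa [List.count_cons] using hcount
    cases a
    · rw [runs_false_cons] at hlen ⊢
      rw [runs_false_cons] at hlen ⊢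
      exact IH hcount' hlen
    · match u', v', h, hcount', hlen, IH with
      | true :: u'', true :: v'', h, hcount', hlen, IH =>
        obtain ⟨n, r, e1, e2⟩ := runs_true_true u''
        obtain ⟨m, s, f1, f2⟩ := runs_true_true v''
        rw [e2, f2] at hlen ⊢
        have := IH hcount' (by rw [e1, f1]; simpa using hlen)
        rw [e1, f1] at this
        injection this with e e'
        rw [e, e']
      | true :: u'', [], h, hcount', hlen, IH => simp [List.count_cons] at hcount'
      | true :: u'', false :: v'', h, hcount', hlen, IH =>
        obtain ⟨n, r, e1, e2⟩ := runs_true_true u''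
        rw [e2, runs_true_false] at hlen
        have hm := (length_runs_mono h).1
        rw [e1, runs_false_cons] at hm
        simp only [List.length_cons] at hlen hm
        omega
      | [], true :: v'', h, hcount', hlen, IH => simp [List.count_cons] at hcount'
      | false :: u'', true :: v'', h, hcount', hlen, IH =>
        have h2 : (false :: u'').Sublist v'' := by
          cases h with
          | cons _ h2 => exact h2
        have := h2.count_le true
        simp [List.count_cons] at hcount' this
        omega
      | [], [], h, hcount', hlen, IH => rfl
      | [], false :: v'', h, hcount', hlen, IH =>
        rw [runs_true_nil, runs_true_false] at hlen ⊢
        have hnil : runs v'' = [] := by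
          have : (runs v'').length = 0 := by simpa using hlen.symm
          exact List.length_eq_zero_iff.mp this
        rw [hnil]
      | false :: u'', [], h, hcount', hlen, IH =>
        exact (List.cons_ne_nil _ _ (List.sublist_nil.mp h)).elim
      | false :: u'', false :: v'', h, hcount', hlen, IH =>
        rw [runs_true_false, runs_true_false] at hlen ⊢
        have := IH hcount' (by
          rw [runs_false_cons, runs_false_cons]
          simpa using hlen)
        rw [runs_false_cons, runs_false_cons] at this
        rw [this]

/-- If `u` is obtained from `v` by deleting only `false` entries and the number of
maximal true-blocks is unchanged, then the ordered list of block lengths is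
unchanged. -/
theorem trueRuns_eq_of_sublist_same_length (u v : List Bool)
    (hsub : List.Sublist u v) (hcount : u.count true = v.count true)
    (hlen : (trueRuns u).length = (trueRuns v).length) :
    trueRuns u = trueRuns v := by
  rw [trueRuns_eq_runs u, trueRuns_eq_runs v] at hlen ⊢
  exact runs_eq hsub hcount hlen
end

section
/- Let c : List Bool and let x_1, ..., x_k be positive integers with trueRuns c = [x_1, ..., x_k]. Let v = false :: (c ++ [false]) be the padded word and let P be the canonical pattern of (x_1, ..., x_k). Then P is a sublist of v (P <+ v) and P.count true = v.count true. That is, if the prover's row is valid, the prover can remove only white cards from the padded row to reach exactly the canonical pattern, as required for Phases 2 and 3 to succeed (per-row completeness). -/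
/-- The canonical pattern of a clue `(x_1, ..., x_k)`:
`[false] ++ replicate x_1 true ++ [false] ++ ... ++ [false] ++ replicate x_k true ++ [false]`. -/
def pattern (x : List ℕ) : List Bool :=
  (x.map (fun a => false :: List.replicate a true)).flatten ++ [false]

namespace PerRowAux

open List

lemma loop_append (r : Bool → Bool → Bool) (l : List Bool) (a : Bool) (g : List Bool)
    (gs : List (List Bool)) :
    List.splitBy.loop r l a g gs = gs.reverse ++ List.splitBy.loop r l a g [] := by
  induction l generalizing a g gs with
  | nil => simp [List.splitBy.loop]
  | cons b l IH =>
    simp only [List.splitBy.loop]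
    split
    · exact IH _ _ _
    · rw [IH, IH b [] [(a :: g).reverse]]; simp

lemma loop_replicate (r : Bool → Bool → Bool) (a : Bool) (h : r a a = true) :
    ∀ (n : ℕ) (l g : List Bool) (gs : List (List Bool)),
      List.splitBy.loop r (List.replicate n a ++ l) a g gs
        = List.splitBy.loop r l a (List.replicate n a ++ g) gs := by
  intro n
  induction n with
  | zero => intro l g gs; simp
  | succ n IH =>
    intro l g gs
    rw [List.replicate_succ, List.cons_append]
    simp only [List.splitBy.loop, h]
    rw [IH]
    congr 1
    rw [← List.replicate_succ, List.replicate_succ', List.append_assoc]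
    rfl

lemma splitBy_replicate (a : Bool) (n : ℕ) :
    (List.replicate (n+1) a).splitBy (· = ·) = [List.replicate (n+1) a] := by
  rw [List.replicate_succ]
  show List.splitBy.loop _ (List.replicate n a) a [] [] = _
  have := loop_replicate (fun x y => decide (x = y)) a (by simp) n [] [] []
  simp only [List.append_nil] at this
  rw [this]
  simp [List.splitBy.loop, ← List.replicate_succ', List.replicate_succ]

lemma splitBy_replicate_cons (a b : Bool) (h : a ≠ b) (n : ℕ) (d : List Bool) :
    (List.replicate (n+1) a ++ b :: d).splitBy (· = ·)
      = List.replicate (n+1) a :: (b :: d).splitBy (· = ·) := by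
  rw [List.replicate_succ, List.cons_append]
  show List.splitBy.loop _ (List.replicate n a ++ b :: d) a [] [] = _
  rw [loop_replicate (fun x y => decide (x = y)) a (by simp) n (b :: d) [] []]
  simp only [List.append_nil, List.splitBy.loop]
  have hab : (decide (a = b)) = false := by simpa using h
  rw [hab]
  simp only []
  rw [loop_append]
  show _ = List.replicate (n + 1) a :: List.splitBy.loop _ d b [] []
  simp [← List.replicate_succ']

lemma trueRuns_true_block (n : ℕ) (d : List Bool) :
    trueRuns (List.replicate (n+1) true ++ false :: d) = (n+1) :: trueRuns (false :: d) := by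
  unfold trueRuns
  rw [splitBy_replicate_cons true false (by simp) n d]
  simp [List.mem_replicate]

lemma trueRuns_false_block (n : ℕ) (d : List Bool) :
    trueRuns (List.replicate (n+1) false ++ true :: d) = trueRuns (true :: d) := by
  unfold trueRuns
  rw [splitBy_replicate_cons false true (by simp) n d]
  simp [List.mem_replicate]

lemma trueRuns_replicate_true (n : ℕ) :
    trueRuns (List.replicate (n+1) true) = [n+1] := by
  unfold trueRuns
  rw [splitBy_replicate]
  simp [List.mem_replicate]

lemma trueRuns_replicate_false (n : ℕ) :
    trueRuns (List.replicate (n+1) false) = [] := by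
  unfold trueRuns
  rw [splitBy_replicate]
  simp [List.mem_replicate]

lemma pattern_cons (a : ℕ) (x : List ℕ) :
    pattern (a :: x) = false :: (List.replicate a true ++ pattern x) := by
  simp [pattern]

lemma exists_decomp (a : Bool) (c : List Bool) :
    ∃ n d, a :: c = List.replicate (n+1) a ++ d ∧ (d = [] ∨ ∃ d', d = (!a) :: d') := by
  induction c with
  | nil => exact ⟨0, [], by simp, Or.inl rfl⟩
  | cons b c IH =>
    by_cases hb : b = a
    · subst hb
      obtain ⟨n, d, hd, hd2⟩ := IH
      refine ⟨n+1, d, ?_, hd2⟩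
      rw [List.replicate_succ, List.cons_append, ← hd]
    · refine ⟨0, b :: c, by simp, Or.inr ⟨c, ?_⟩⟩
      cases a <;> cases b <;> simp_all

lemma trueRuns_false_cons (l : List Bool) : trueRuns (false :: l) = trueRuns l := by
  cases l with
  | nil =>
    have := trueRuns_replicate_false 0
    simpa [show trueRuns ([] : List Bool) = [] by simp [trueRuns]] using this
  | cons b l' =>
    cases b with
    | true =>
      have := trueRuns_false_block 0 l'
      simpa using this
    | false =>
      obtain ⟨m, d, hd, hcase⟩ := exists_decomp false l'
      rcases hcase with rfl | ⟨d'', rfl⟩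
      · rw [List.append_nil] at hd
        rw [hd, ← List.replicate_succ, trueRuns_replicate_false, trueRuns_replicate_false]
      · simp only [Bool.not_false] at hd
        rw [hd, ← List.cons_append, ← List.replicate_succ,
          trueRuns_false_block, trueRuns_false_block]

lemma main : ∀ (N : ℕ) (c : List Bool), c.length ≤ N →
    List.Sublist (pattern (trueRuns c)) (false :: (c ++ [false])) ∧
      (pattern (trueRuns c)).count true = (false :: (c ++ [false])).count true := by
  intro N
  induction N with
  | zero =>
    intro c hc
    rw [List.length_eq_zero_iff.mp (Nat.le_zero.mp hc)]
    refine ⟨?_, by simp [trueRuns, pattern]⟩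
    show List.Sublist (pattern (trueRuns [])) [false, false]
    simp only [trueRuns, List.splitBy_nil, List.filter_nil, List.map_nil, pattern,
      List.map_nil, List.flatten_nil, List.nil_append]
    exact (List.sublist_cons_self _ _).cons₂ _
  | succ N IH =>
    intro c hc
    match c with
    | [] => exact IH [] (by simp)
    | a :: c' =>
      obtain ⟨n, d, hcd, hd⟩ := exists_decomp a c'
      have hlen0 : c'.length + 1 ≤ N + 1 := by simpa using hc
      have hlend : (n + 1) + d.length = c'.length + 1 := by
        have := congrArg List.length hcd
        simpa [List.length_replicate] using this.symm
      rw [hcd]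
      cases a with
      | true =>
        rcases hd with rfl | ⟨d', rfl⟩
        · rw [List.append_nil, trueRuns_replicate_true, pattern_cons]
          constructor
          · simp [pattern, trueRuns]
          · simp [pattern, trueRuns, List.count_replicate]
        · simp only [Bool.not_true] at *
          rw [trueRuns_true_block, trueRuns_false_cons, pattern_cons]
          have hlen : d'.length ≤ N := by
            simp only [List.length_cons] at hlend
            omega
          obtain ⟨h1, h2⟩ := IH d' hlen
          constructor
          · refine List.Sublist.cons₂ _ ?_
            rw [List.append_assoc]
            exact List.Sublist.append_left (by simpa using h1) _
          · simp only [List.count_cons, List.count_append, List.count_replicate,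
              List.cons_append] at *
            simpa using h2
      | false =>
        rcases hd with rfl | ⟨d', rfl⟩
        · rw [List.append_nil, trueRuns_replicate_false]
          constructor
          · simp only [pattern, List.map_nil, List.flatten_nil, List.nil_append]
            exact (List.nil_sublist _).cons₂ _
          · simp [pattern, trueRuns, List.count_replicate]
        · simp only [Bool.not_false] at *
          rw [trueRuns_false_block]
          have hlen : (true :: d').length ≤ N := by
            simp only [List.length_cons] at hlend ⊢
            omega
          obtain ⟨h1, h2⟩ := IH (true :: d') hlen
          constructor
          · refine h1.trans (List.Sublist.cons₂ _ ?_)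
            rw [List.append_assoc]
            exact List.sublist_append_right _ _
          · simp only [List.count_cons, List.count_append, List.count_replicate,
              List.cons_append] at *
            simpa using h2

end PerRowAux

/-- Per-row completeness: if the prover's row `c` has true-runs exactly
`(x_1, ..., x_k)`, then the canonical pattern can be reached from the padded word
`false :: (c ++ [false])` by removing only `false` entries, i.e. it is a sublist with
the same number of `true` entries. -/
theorem per_row_completeness (c : List Bool) (x : List ℕ)
    (hx : ∀ a ∈ x, 0 < a) (h : trueRuns c = x) :
    List.Sublist (pattern x) (false :: (c ++ [false])) ∧
      (pattern x).count true = (false :: (c ++ [false])).count true := by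
  subst h
  exact PerRowAux.main c.length c le_rfl
end
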